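/- arXiv:1902.11260 — 2 statements merged into one kernel-verified Lean document; each statement's English description precedes it below -/
import Mathlib

section
/- For an undirected simple graph G on [n], the separation gaussoid ⟨G⟩ = {(ij|K) : K separates i and j in G} is a gaussoid satisfying the ascension axiom (ij|L) ⟹ (ij|kL); moreover G ↦ ⟨G⟩ is a bijection between graphs on [n] and ascending gaussoids, with inverse recovering the edge set as E = {ij : (ij|[n]\{i,j}) ∉ ⟨G⟩}. -/
abbrev Sq (n : ℕ) := Finset (Fin n) × Finset (Fin n)

/-- `G` is an `n`-gaussoid (set version). -/
def IsGaussoid (n : ℕ) (G : Set (Sq n)) : Prop :=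
  (∀ x ∈ G, x.1.card = 2 ∧ Disjoint x.1 x.2) ∧
  ∀ i j k : Fin n, ∀ L : Finset (Fin n),
    i ≠ j → i ≠ k → j ≠ k → i ∉ L → j ∉ L → k ∉ L →
    ((({i,j}, L) ∈ G ∧ ({i,k}, insert j L) ∈ G →
        ({i,k}, L) ∈ G ∧ ({i,j}, insert k L) ∈ G) ∧
     (({i,j}, insert k L) ∈ G ∧ ({i,k}, insert j L) ∈ G →
        ({i,j}, L) ∈ G ∧ ({i,k}, L) ∈ G) ∧
     (({i,j}, L) ∈ G ∧ ({i,k}, L) ∈ G →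
        ({i,j}, insert k L) ∈ G ∧ ({i,k}, insert j L) ∈ G) ∧
     (({i,j}, L) ∈ G ∧ ({i,j}, insert k L) ∈ G →
        ({i,k}, L) ∈ G ∨ ({j,k}, L) ∈ G))

/-- The ascension axiom: `(ij|L) ⟹ (ij|kL)`. -/
def Ascending (n : ℕ) (G : Set (Sq n)) : Prop :=
  ∀ i j k : Fin n, ∀ L : Finset (Fin n),
    i ≠ j → k ≠ i → k ≠ j → k ∉ L →
    ({i,j}, L) ∈ G → ({i,j}, insert k L) ∈ G

/-- `K` separates `i` and `j` in the graph `G`: every path from `i` to `j`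
meets `K`. -/
def Separates {n : ℕ} (G : SimpleGraph (Fin n)) (i j : Fin n)
    (K : Finset (Fin n)) : Prop :=
  ∀ w : G.Walk i j, ∃ v ∈ w.support, v ∈ K

/-- The separation gaussoid `⟨G⟩` of an undirected simple graph `G` on `[n]`. -/
def sepGaussoid {n : ℕ} (G : SimpleGraph (Fin n)) : Set (Sq n) :=
  {x | ∃ i j : Fin n, i ≠ j ∧ x.1 = {i,j} ∧ Disjoint x.1 x.2 ∧
        Separates G i j x.2}

/-!
Vertex separation in a graph is monotone in the separating set (ascension) and satisfies
contraction, intersection and `(ij|L) ⟹ (ik|L) ∨ (kj|L)`, a strong form of weak transitivity;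
so `⟨G⟩` is an ascending gaussoid. It determines `G`, since `i, j` are adjacent exactly when
`[n]\ij` does not separate them.

Conversely, let `A` be an ascending gaussoid and `G` the graph with edges `ij` such that
`(ij|[n]\ij) ∉ A`. If `(ij|L) ∈ A` and a walk `i, k, …, j` avoids `L`, then ascension gives
`(ij|kL)` and weak transitivity `(ik|L)` or `(kj|L)`; the first contradicts the edge `ik` after
ascending to `[n]\ik`, the second lets us continue along the walk. If `L` separates `i` and `j`,
then `(ij|L) ∈ A` by downward induction on `L`: for `k ∉ ijL`, `L` separates `k` from `i` or from
`j`, say from `i`; then `(ij|kL)` and `(ik|jL)` hold by induction and intersection gives `(ij|L)`.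
-/

open Finset SimpleGraph

variable {n : ℕ} {G : SimpleGraph (Fin n)} {i j k : Fin n} {K L : Finset (Fin n)}

namespace Separates

theorem symm (h : Separates G i j K) : Separates G j i K := fun w ↦ by
  simpa using h w.reverse

theorem mono (h : Separates G i j K) (hKL : K ⊆ L) : Separates G i j L := fun w ↦ by
  obtain ⟨v, hv, hvK⟩ := h w
  exact ⟨v, hv, hKL hvK⟩

theorem mem_support_of_insert (h : Separates G i j (insert k L)) (w : G.Walk i j)
    (hw : ∀ v ∈ w.support, v ∉ L) : k ∈ w.support := by
  obtain ⟨v, hv, hvkL⟩ := h w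
  rcases mem_insert.mp hvkL with rfl | hvL
  · exact hv
  · exact absurd hvL (hw v hv)

theorem contraction (hij : Separates G i j L) (hik : Separates G i k (insert j L)) :
    Separates G i k L := by
  intro w
  by_cases hj : j ∈ w.support
  · obtain ⟨v, hv, hvL⟩ := hij (w.takeUntil j hj)
    exact ⟨v, w.support_takeUntil_subset_support hj hv, hvL⟩
  · by_contra! hw
    exact hj (hik.mem_support_of_insert w hw)

/- A walk from `i` to `j` avoiding `L` visits `k`, and its part before the first `k` visits `j`;
the part before the first `j` then avoids both `L` and `k`. -/
theorem intersection (hjk : j ≠ k) (hij : Separates G i j (insert k L))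
    (hik : Separates G i k (insert j L)) : Separates G i j L := by
  intro w
  by_contra! hw
  have hk := hij.mem_support_of_insert w hw
  have hj : j ∈ (w.takeUntil k hk).support :=
    hik.mem_support_of_insert _ fun v hv ↦ hw v (w.support_takeUntil_subset_support hk hv)
  exact Walk.notMem_support_takeUntil_support_takeUntil_subset hjk hk hj
    (hij.mem_support_of_insert _ fun v hv ↦ hw v (w.support_takeUntil_subset_support _ hv))

theorem cotrans (h : Separates G i j L) (k : Fin n) :
    Separates G i k L ∨ Separates G k j L := by
  by_contra! hc
  obtain ⟨⟨w₁, hw₁⟩, ⟨w₂, hw₂⟩⟩ : (∃ w₁ : G.Walk i k, ∀ v ∈ w₁.support, v ∉ L) ∧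
      ∃ w₂ : G.Walk k j, ∀ v ∈ w₂.support, v ∉ L := by
    simpa [Separates] using hc
  obtain ⟨v, hv, hvL⟩ := h (w₁.append w₂)
  rcases w₁.mem_support_append_iff w₂ |>.mp hv with hv | hv
  · exact hw₁ v hv hvL
  · exact hw₂ v hv hvL

end Separates

theorem adj_iff_not_separates_compl (hij : i ≠ j) :
    G.Adj i j ↔ ¬ Separates G i j (univ \ {i, j}) := by
  constructor
  · intro hadj hsep
    obtain ⟨v, hv, hvK⟩ := hsep hadj.toWalk
    simp_all
  · intro hsep
    by_contra hadj
    refine hsep fun w ↦ ?_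
    cases w with
    | nil => exact absurd rfl hij
    | @cons _ k _ hik q =>
      refine ⟨k, by simp, ?_⟩
      simp only [mem_sdiff, mem_univ, mem_insert, mem_singleton, true_and, not_or]
      exact ⟨hik.ne', by rintro rfl; exact hadj hik⟩

theorem pair_mem_sepGaussoid_iff (hij : i ≠ j) :
    (({i, j}, L) : Sq n) ∈ sepGaussoid G ↔ i ∉ L ∧ j ∉ L ∧ Separates G i j L := by
  constructor
  · rintro ⟨a, b, -, hab, hdisj, hsep⟩
    have hab' : ({i, j} : Set (Fin n)) = {a, b} := by
      simpa using congrArg ((↑) : Finset (Fin n) → Set (Fin n)) (hab : ({i, j} : Finset _) = {a, b})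
    rcases Set.pair_eq_pair_iff.mp hab' with ⟨rfl, rfl⟩ | ⟨rfl, rfl⟩
    · simp_all [disjoint_insert_left]
    · simp_all [disjoint_insert_left, hsep.symm]
  · rintro ⟨hi, hj, hsep⟩
    exact ⟨i, j, hij, rfl, by simp [disjoint_insert_left, hi, hj], hsep⟩

theorem adj_iff_pair_compl_notMem_sepGaussoid (hij : i ≠ j) :
    G.Adj i j ↔ (({i, j}, univ \ {i, j}) : Sq n) ∉ sepGaussoid G := by
  simp [pair_mem_sepGaussoid_iff hij, adj_iff_not_separates_compl hij]

theorem isGaussoid_sepGaussoid : IsGaussoid n (sepGaussoid G) := by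
  refine ⟨?_, fun i j k L hij hik hjk hi hj hk ↦ ?_⟩
  · rintro _ ⟨i, j, hij, h, hdisj, -⟩
    exact ⟨h ▸ card_pair hij, hdisj⟩
  simp only [pair_mem_sepGaussoid_iff, hij, hik, hjk, hjk.symm, mem_insert, hi, hj, hk,
    ne_eq, not_false_eq_true, true_and, or_self]
  exact ⟨fun ⟨hij, hik⟩ ↦ ⟨hij.contraction hik, hij.mono (subset_insert _ _)⟩,
    fun ⟨hij, hik⟩ ↦ ⟨hij.intersection hjk hik, hik.intersection hjk.symm hij⟩,
    fun ⟨hij, hik⟩ ↦ ⟨hij.mono (subset_insert _ _), hik.mono (subset_insert _ _)⟩,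
    fun ⟨hij, _⟩ ↦ (hij.cotrans k).imp id Separates.symm⟩

theorem ascending_sepGaussoid : Ascending n (sepGaussoid G) := by
  intro i j k L hij hki hkj hk h
  rw [pair_mem_sepGaussoid_iff hij] at h ⊢
  exact ⟨by simp [hki.symm, h.1], by simp [hkj.symm, h.2.1], h.2.2.mono (subset_insert _ _)⟩

def gaussoidGraph (A : Set (Sq n)) : SimpleGraph (Fin n) where
  Adj i j := i ≠ j ∧ (({i, j}, univ \ {i, j}) : Sq n) ∉ A
  symm := ⟨fun i j h ↦ ⟨h.1.symm, by rw [pair_comm]; exact h.2⟩⟩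
  loopless := ⟨fun i h ↦ h.1 rfl⟩

section Ascending

variable {A : Set (Sq n)}

theorem gaussoidGraph_adj :
    (gaussoidGraph A).Adj i j ↔ i ≠ j ∧ (({i, j}, univ \ {i, j}) : Sq n) ∉ A :=
  Iff.rfl

theorem IsGaussoid.ne_and_notMem_of_mem (hA : IsGaussoid n A) (h : (({i, j}, L) : Sq n) ∈ A) :
    i ≠ j ∧ i ∉ L ∧ j ∉ L := by
  obtain ⟨hcard, hdisj⟩ := hA.1 _ h
  exact ⟨card_pair_eq_two_iff.mp hcard, by simpa [disjoint_insert_left] using hdisj⟩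

theorem Ascending.mem_of_subset (hasc : Ascending n A) {M : Finset (Fin n)} (hij : i ≠ j)
    (hLM : L ⊆ M) (hi : i ∉ M) (hj : j ∉ M) (h : (({i, j}, L) : Sq n) ∈ A) :
    (({i, j}, M) : Sq n) ∈ A := by
  suffices ∀ s ⊆ M \ L, (({i, j}, L ∪ s) : Sq n) ∈ A by
    simpa [union_sdiff_of_subset hLM] using this _ subset_rfl
  intro s hs
  induction s using Finset.induction_on with
  | empty => simpa using h
  | @insert k s hks ih =>
    obtain ⟨hkM, hkL⟩ := mem_sdiff.mp (hs (mem_insert_self k s))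
    rw [union_insert]
    exact hasc i j k _ hij (ne_of_mem_of_not_mem hkM hi) (ne_of_mem_of_not_mem hkM hj)
      (by simp [hkL, hks]) (ih ((subset_insert k s).trans hs))

theorem not_adj_gaussoidGraph_of_mem (hA : IsGaussoid n A) (hasc : Ascending n A)
    (h : (({i, j}, L) : Sq n) ∈ A) : ¬ (gaussoidGraph A).Adj i j := by
  obtain ⟨hij, hi, hj⟩ := hA.ne_and_notMem_of_mem h
  exact fun hadj ↦ (gaussoidGraph_adj.mp hadj).2
    (hasc.mem_of_subset hij (by simp [subset_sdiff, hi, hj]) (by simp) (by simp) h)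

theorem separates_gaussoidGraph_of_mem (hA : IsGaussoid n A) (hasc : Ascending n A)
    (h : (({i, j}, L) : Sq n) ∈ A) : Separates (gaussoidGraph A) i j L := by
  intro w
  induction w with
  | nil => exact absurd rfl (hA.ne_and_notMem_of_mem h).1
  | @cons i k j hik q ih =>
    obtain ⟨hij, hi, hj⟩ := hA.ne_and_notMem_of_mem h
    by_cases hkL : k ∈ L
    · exact ⟨k, by simp, hkL⟩
    by_cases hkj : k = j
    · subst hkj
      exact absurd hik (not_adj_gaussoidGraph_of_mem hA hasc h)
    -- ascension gives `(ij|kL)`, then weak transitivity gives `(ik|L)` or `(jk|L)`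
    have hijk := hasc i j k L hij hik.ne' hkj hkL h
    rcases (hA.2 i j k L hij hik.ne (Ne.symm hkj) hi hj hkL).2.2.2 ⟨h, hijk⟩ with hik' | hjk
    · exact absurd hik (not_adj_gaussoidGraph_of_mem hA hasc hik')
    · obtain ⟨v, hv, hvL⟩ := ih (by rwa [pair_comm])
      exact ⟨v, by simp [hv], hvL⟩

theorem mem_of_separates_gaussoidGraph (hA : IsGaussoid n A) (hij : i ≠ j) (hi : i ∉ L)
    (hj : j ∉ L) (h : Separates (gaussoidGraph A) i j L) : (({i, j}, L) : Sq n) ∈ A := by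
  have hcard (t : Finset (Fin n)) : #t ≤ n := by simpa using card_le_univ t
  induction L using Finset.strongDownwardInduction (n := n) generalizing i j
  case a => exact hcard L
  case H L ih _ =>
    by_cases hL : ∃ k, k ≠ i ∧ k ≠ j ∧ k ∉ L
    · obtain ⟨k, hki, hkj, hk⟩ := hL
      -- `(ab|kL)` and `(ak|bL)` hold by induction, and the intersection axiom gives `(ab|L)`
      have step {a b : Fin n} (hab : a ≠ b) (hak : a ≠ k) (hbk : b ≠ k) (ha : a ∉ L) (hb : b ∉ L)
          (hsab : Separates (gaussoidGraph A) a b L) (hsak : Separates (gaussoidGraph A) a k L) :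
          (({a, b}, L) : Sq n) ∈ A := by
        have habk := ih (hcard _) (ssubset_insert hk) hab (by simp [hak, ha]) (by simp [hbk, hb])
          (hsab.mono (subset_insert _ _))
        have hakb := ih (hcard _) (ssubset_insert hb) hak (by simp [hab, ha])
          (by simp [hbk.symm, hk]) (hsak.mono (subset_insert _ _))
        exact ((hA.2 a b k L hab hak hbk ha hb hk).2.1 ⟨habk, hakb⟩).1
      rcases h.cotrans k with hsik | hskj
      · exact step hij hki.symm hkj.symm hi hj h hsik
      · rw [pair_comm]
        exact step hij.symm hkj.symm hki.symm hj hi h.symm hskj.symm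
    · have hL : L = univ \ {i, j} := by
        ext v
        simp only [mem_sdiff, mem_univ, mem_insert, mem_singleton, true_and, not_or]
        grind
      subst hL
      by_contra hmem
      exact (adj_iff_not_separates_compl hij).mp (gaussoidGraph_adj.mpr ⟨hij, hmem⟩) h

theorem sepGaussoid_gaussoidGraph (hA : IsGaussoid n A) (hasc : Ascending n A) :
    sepGaussoid (gaussoidGraph A) = A := by
  ext ⟨P, L⟩
  constructor
  · rintro ⟨i, j, hij, rfl, hdisj, hsep⟩
    obtain ⟨hi, hj⟩ : i ∉ L ∧ j ∉ L := by simpa [disjoint_insert_left] using hdisj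
    exact mem_of_separates_gaussoidGraph hA hij hi hj hsep
  · intro h
    obtain ⟨i, j, -, rfl⟩ := card_eq_two.mp (hA.1 _ h).1
    obtain ⟨hij, hi, hj⟩ := hA.ne_and_notMem_of_mem h
    exact (pair_mem_sepGaussoid_iff hij).mpr ⟨hi, hj, separates_gaussoidGraph_of_mem hA hasc h⟩

end Ascending

theorem gaussoidGraph_sepGaussoid : gaussoidGraph (sepGaussoid G) = G := by
  ext i j
  rw [gaussoidGraph_adj]
  by_cases hij : i = j
  · subst hij
    simp
  · simp [hij, ← adj_iff_pair_compl_notMem_sepGaussoid hij]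

/-- For every graph `G` on `[n]`, `⟨G⟩` is an ascending gaussoid; the map
`G ↦ ⟨G⟩` is a bijection onto the ascending gaussoids, and the inverse
recovers the edges as `E = {ij : (ij|[n]\ij) ∉ ⟨G⟩}`. -/
theorem stmt_18 (n : ℕ) :
    (∀ G : SimpleGraph (Fin n),
      IsGaussoid n (sepGaussoid G) ∧ Ascending n (sepGaussoid G) ∧
      (∀ i j : Fin n, i ≠ j →
        (G.Adj i j ↔ (({i,j}, Finset.univ \ {i,j}) : Sq n) ∉ sepGaussoid G))) ∧
    Function.Injective (sepGaussoid (n := n)) ∧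
    (∀ A : Set (Sq n), IsGaussoid n A → Ascending n A →
      ∃ G : SimpleGraph (Fin n), sepGaussoid G = A) :=
  ⟨fun _ ↦ ⟨isGaussoid_sepGaussoid, ascending_sepGaussoid,
      fun _ _ ↦ adj_iff_pair_compl_notMem_sepGaussoid⟩,
    Function.LeftInverse.injective (g := gaussoidGraph) fun _ ↦ gaussoidGraph_sepGaussoid,
    fun A hA hasc ↦ ⟨gaussoidGraph A, sepGaussoid_gaussoidGraph hA hasc⟩⟩
end

section
/- Bi-monotone gaussoids (gaussoids satisfying both the ascension axiom (ij|L) ⟹ (ij|kL) and the descension axiom (ij|kL) ⟹ (ij|L)) on ground set [n] are in bijection with the partitions of [n]: a bi-monotone gaussoid is exactly the set of symbols (ij|K) with i and j in different blocks of a partition, for a unique partition of [n]. -/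
/-- The descension axiom: `(ij|kL) ⟹ (ij|L)`. -/
def Descending (n : ℕ) (G : Set (Sq n)) : Prop :=
  ∀ i j k : Fin n, ∀ L : Finset (Fin n),
    i ≠ j → k ≠ i → k ≠ j → k ∉ L →
    ({i,j}, insert k L) ∈ G → ({i,j}, L) ∈ G

/-- The set of squares associated to a partition (equivalence relation) `s` of
`[n]`: all symbols `(ij|K)` such that `i` and `j` lie in different blocks. -/
def partGaussoid {n : ℕ} (s : Setoid (Fin n)) : Set (Sq n) :=
  {x | ∃ i j : Fin n, i ≠ j ∧ x.1 = {i,j} ∧ Disjoint x.1 x.2 ∧ ¬ s.r i j}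

/-!
Under bi-monotonicity, membership of `(ij|K)` depends only on the pair `ij`, so a bi-monotone
gaussoid is a symmetric irreflexive relation on `[n]`. If `(ij|)` holds, ascension gives `(ij|k)`,
and axiom (G4) then yields `(ik|)` or `(jk|)`: the complement relation is transitive, hence an
equivalence relation, whose classes are the blocks of the partition. Conversely, "lying in
different blocks" of a partition satisfies all the axioms by transitivity of the partition.
-/

variable {n : ℕ}

lemma mem_partGaussoid_pair (s : Setoid (Fin n)) {i j : Fin n} {L : Finset (Fin n)}
    (hij : i ≠ j) :
    (({i, j}, L) : Sq n) ∈ partGaussoid s ↔ i ∉ L ∧ j ∉ L ∧ ¬ s.r i j := by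
  constructor
  · rintro ⟨a, b, -, hab, hdisj, hnr⟩
    have hi : i ∈ ({a, b} : Finset (Fin n)) := hab ▸ Finset.mem_insert_self i {j}
    have hj : j ∈ ({a, b} : Finset (Fin n)) :=
      hab ▸ Finset.mem_insert_of_mem (Finset.mem_singleton_self j)
    simp only [Finset.mem_insert, Finset.mem_singleton] at hi hj
    simp only [Finset.disjoint_insert_left, Finset.disjoint_singleton_left] at hdisj
    refine ⟨hdisj.1, hdisj.2, ?_⟩
    rcases hi with rfl | rfl <;> rcases hj with rfl | rfl
    · exact absurd rfl hij
    · exact hnr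
    · exact fun h => hnr (s.symm h)
    · exact absurd rfl hij
  · rintro ⟨hi, hj, hnr⟩
    exact ⟨i, j, hij, rfl, by simp [hi, hj], hnr⟩

lemma partGaussoid_injective : Function.Injective (partGaussoid (n := n)) := by
  intro s t hst
  ext a b
  by_cases hab : a = b
  · subst hab
    exact iff_of_true (s.refl a) (t.refl a)
  have key := mem_partGaussoid_pair s hab (L := ∅)
  rw [hst, mem_partGaussoid_pair t hab] at key
  simp only [Finset.notMem_empty, not_false_eq_true, true_and] at key
  exact not_iff_not.mp key.symm

lemma isGaussoid_partGaussoid (s : Setoid (Fin n)) : IsGaussoid n (partGaussoid s) := by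
  refine ⟨?_, ?_⟩
  · rintro x ⟨i, j, hij, hx, hdisj, -⟩
    exact ⟨hx ▸ Finset.card_pair hij, hdisj⟩
  · intro i j k L hij hik hjk hiL hjL hkL
    have htrans : s.r i k → s.r j k → s.r i j := fun h₁ h₂ => s.trans h₁ (s.symm h₂)
    have := hij.symm; have := hik.symm; have := hjk.symm
    simp only [mem_partGaussoid_pair s hij, mem_partGaussoid_pair s hik,
      mem_partGaussoid_pair s hjk, Finset.mem_insert, not_or]
    tauto

lemma ascending_partGaussoid (s : Setoid (Fin n)) : Ascending n (partGaussoid s) := by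
  intro i j k L hij hki hkj _ hmem
  rw [mem_partGaussoid_pair s hij] at hmem ⊢
  simp only [Finset.mem_insert, not_or]
  exact ⟨⟨hki.symm, hmem.1⟩, ⟨hkj.symm, hmem.2.1⟩, hmem.2.2⟩

lemma descending_partGaussoid (s : Setoid (Fin n)) : Descending n (partGaussoid s) := by
  intro i j k L hij _ _ _ hmem
  rw [mem_partGaussoid_pair s hij] at hmem ⊢
  simp only [Finset.mem_insert, not_or] at hmem
  exact ⟨hmem.1.2, hmem.2.1.2, hmem.2.2⟩

lemma mem_pair_iff_mem_pair_empty {A : Set (Sq n)} (hAsc : Ascending n A)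
    (hDesc : Descending n A) {i j : Fin n} (hij : i ≠ j) {L : Finset (Fin n)}
    (hi : i ∉ L) (hj : j ∉ L) : (({i, j}, L) : Sq n) ∈ A ↔ (({i, j}, ∅) : Sq n) ∈ A := by
  induction L using Finset.induction_on with
  | empty => rfl
  | @insert k L hk ih =>
    simp only [Finset.mem_insert, not_or] at hi hj
    rw [← ih hi.2 hj.2]
    exact ⟨hDesc i j k L hij (Ne.symm hi.1) (Ne.symm hj.1) hk,
      hAsc i j k L hij (Ne.symm hi.1) (Ne.symm hj.1) hk⟩

lemma IsGaussoid.pair_empty_mem_or_mem {A : Set (Sq n)} (hG : IsGaussoid n A)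
    (hAsc : Ascending n A) {i j k : Fin n} (hij : i ≠ j) (hik : i ≠ k) (hjk : j ≠ k)
    (h : (({i, j}, ∅) : Sq n) ∈ A) :
    (({i, k}, ∅) : Sq n) ∈ A ∨ (({j, k}, ∅) : Sq n) ∈ A :=
  (hG.2 i j k ∅ hij hik hjk (Finset.notMem_empty i) (Finset.notMem_empty j)
    (Finset.notMem_empty k)).2.2.2
    ⟨h, hAsc i j k ∅ hij hik.symm hjk.symm (Finset.notMem_empty k) h⟩

def IsGaussoid.blockSetoid {A : Set (Sq n)} (hG : IsGaussoid n A) (hAsc : Ascending n A) :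
    Setoid (Fin n) where
  r i j := i = j ∨ (({i, j}, ∅) : Sq n) ∉ A
  iseqv := by
    refine ⟨fun _ => Or.inl rfl, ?_, ?_⟩
    · rintro i j (rfl | h)
      · exact Or.inl rfl
      · exact Or.inr (by rwa [Finset.pair_comm])
    · rintro i j k (rfl | hij) (rfl | hjk)
      · exact Or.inl rfl
      · exact Or.inr hjk
      · exact Or.inr hij
      by_cases hik : i = k
      · exact Or.inl hik
      refine Or.inr fun hmem => ?_
      have hij' : i ≠ j := by rintro rfl; exact hjk hmem
      have hjk' : j ≠ k := by rintro rfl; exact hij hmem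
      rcases hG.pair_empty_mem_or_mem hAsc hik hij' hjk'.symm hmem with h | h
      · exact hij h
      · exact hjk (by rwa [Finset.pair_comm])

lemma IsGaussoid.eq_partGaussoid_blockSetoid {A : Set (Sq n)} (hG : IsGaussoid n A)
    (hAsc : Ascending n A) (hDesc : Descending n A) :
    A = partGaussoid (hG.blockSetoid hAsc) := by
  ext ⟨K, L⟩
  constructor
  · intro hx
    obtain ⟨hcard, hdisj⟩ := hG.1 _ hx
    obtain ⟨i, j, hij, rfl⟩ := Finset.card_eq_two.mp hcard
    simp only [Finset.disjoint_insert_left, Finset.disjoint_singleton_left] at hdisj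
    refine (mem_partGaussoid_pair _ hij).mpr ⟨hdisj.1, hdisj.2, ?_⟩
    rintro (h | h)
    · exact hij h
    · exact h ((mem_pair_iff_mem_pair_empty hAsc hDesc hij hdisj.1 hdisj.2).mp hx)
  · rintro ⟨i, j, hij, rfl, hdisj, hnr⟩
    simp only [Finset.disjoint_insert_left, Finset.disjoint_singleton_left] at hdisj
    refine (mem_pair_iff_mem_pair_empty hAsc hDesc hij hdisj.1 hdisj.2).mpr ?_
    by_contra h
    exact hnr (Or.inr h)

/-- Bi-monotone gaussoids are in bijection with the partitions of `[n]`: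
each partition yields a bi-monotone gaussoid, and every bi-monotone gaussoid
comes from a unique partition. -/
theorem stmt_19 (n : ℕ) :
    (∀ s : Setoid (Fin n),
      IsGaussoid n (partGaussoid s) ∧ Ascending n (partGaussoid s) ∧
        Descending n (partGaussoid s)) ∧
    (∀ A : Set (Sq n), IsGaussoid n A → Ascending n A → Descending n A →
      ∃! s : Setoid (Fin n), A = partGaussoid s) := by
  refine ⟨fun s => ⟨isGaussoid_partGaussoid s, ascending_partGaussoid s,
    descending_partGaussoid s⟩, fun A hG hAsc hDesc => ?_⟩
  have hA := hG.eq_partGaussoid_blockSetoid hAsc hDesc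
  exact ⟨_, hA, fun t ht => partGaussoid_injective (ht.symm.trans hA)⟩
end
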